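/- arXiv:1505.02045 — 4 statements merged into one kernel-verified Lean document; each statement's English description precedes it below -/
import Mathlib

section
/- For any matroid M on ground set [n], the Bergman fan B(M) = {x ∈ R^n : for every circuit C of M, max_{i ∈ C} x_i is attained at least twice} is tropically convex. -/
def TropConvex {n : ℕ} (S : Set (Fin n → ℝ)) : Prop :=
  ∀ x ∈ S, ∀ y ∈ S, ∀ lam mu : ℝ, (fun i => max (x i + lam) (y i + mu)) ∈ S

/-- The Bergman fan `B(M)` of a matroid with circuit family `Circuits` is tropically
convex: the set of `x` such that for each circuit `C`, `max_{i ∈ C} x i` is attained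
at least twice. -/
theorem stmt5 {n : ℕ} (Circuits : Set (Set (Fin n)))
    (hC : ∀ C ∈ Circuits, C.Nonempty) :
    TropConvex {x : Fin n → ℝ | ∀ C ∈ Circuits,
      ∃ i ∈ C, ∃ j ∈ C, i ≠ j ∧ x i = x j ∧ ∀ k ∈ C, x k ≤ x i} := by
  intro x hx y hy lam mu C hCmem
  obtain ⟨i, hi, j, hj, hij, hxij, hxmax⟩ := hx C hCmem
  obtain ⟨i', hi', j', hj', hij', hyij, hymax⟩ := hy C hCmem
  rcases le_total (y i' + mu) (x i + lam) with h | h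
  · refine ⟨i, hi, j, hj, hij, ?_, ?_⟩
    · simp only
      rw [max_eq_left (show y i + mu ≤ x i + lam by linarith [hymax i hi]),
        max_eq_left (show y j + mu ≤ x j + lam by linarith [hymax j hj, hxij]), hxij]
    · intro k hk
      simp only
      exact max_le (le_trans (by linarith [hxmax k hk]) (le_max_left _ _))
        (le_trans (le_trans (by linarith [hymax k hk]) h) (le_max_left _ _))
  · refine ⟨i', hi', j', hj', hij', ?_, ?_⟩
    · simp only
      rw [max_eq_right (show x i' + lam ≤ y i' + mu by linarith [hxmax i' hi']),
        max_eq_right (show x j' + lam ≤ y j' + mu by linarith [hxmax j' hj', hyij]), hyij]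
    · intro k hk
      simp only
      exact max_le (le_trans (le_trans (by linarith [hxmax k hk]) h) (le_max_right _ _))
        (le_trans (by linarith [hymax k hk]) (le_max_right _ _))
end

section
/- If X ⊆ R^n/R·1 is the support of a polyhedral complex and is tropically convex, then for any point p in X, the star of X at p (the set of directions v such that p + αv ∈ X for all sufficiently small α ≥ 0) is tropically convex. -/
/-- A polyhedron in `ℝⁿ`: an intersection of finitely many affine halfspaces. -/
def IsPolyhedron {n : ℕ} (P : Set (Fin n → ℝ)) : Prop :=
  ∃ (m : ℕ) (a : Fin m → Fin n → ℝ) (b : Fin m → ℝ),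
    P = {x | ∀ j, ∑ i, a j i * x i ≤ b j}

/-- The star of `S` at `p`: directions `v` with `p + αv ∈ S` for all small `α ≥ 0`. -/
def TropStar {n : ℕ} (S : Set (Fin n → ℝ)) (p : Fin n → ℝ) : Set (Fin n → ℝ) :=
  {v | ∃ r > (0:ℝ), ∀ α ∈ Set.Icc (0:ℝ) r, p + α • v ∈ S}

/-- If `S` is a closed finite union of polyhedra whose support is tropically convex,
then its star at any point `p ∈ S` is tropically convex. -/
theorem stmt9 {n : ℕ} (S : Set (Fin n → ℝ)) (hclosed : IsClosed S)
    (hpoly : ∃ (m : ℕ) (P : Fin m → Set (Fin n → ℝ)),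
      (∀ k, IsPolyhedron (P k)) ∧ S = ⋃ k, P k)
    (hS : TropConvex S) (p : Fin n → ℝ) (hp : p ∈ S) :
    TropConvex (TropStar S p) := by
  rintro v ⟨r, hr, hv⟩ v' ⟨r', hr', hv'⟩ lam mu
  refine ⟨min r r', lt_min hr hr', fun α ⟨hα0, hαr⟩ => ?_⟩
  have hx := hv α ⟨hα0, hαr.trans (min_le_left _ _)⟩
  have hy := hv' α ⟨hα0, hαr.trans (min_le_right _ _)⟩
  have h := hS _ hx _ hy (α * lam) (α * mu)
  have : (fun i => max ((p + α • v) i + α * lam) ((p + α • v') i + α * mu))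
      = p + α • (fun i => max (v i + lam) (v' i + mu)) := by
    funext i
    simp only [Pi.add_apply, Pi.smul_apply, smul_eq_mul]
    rw [add_assoc, add_assoc, ← mul_add, ← mul_add, mul_max_of_nonneg _ _ hα0, max_add_add_left]
  rwa [this] at h
end

section
/- Let x, y, z ∈ R^n and let p be any point of the tropical convex hull tconv{x,y}. Then the set of indices where p − z attains its maximum is contained in the union of the index sets where x − z and y − z attain their maxima: I_max(p−z) ⊆ I_max(x−z) ∪ I_max(y−z). -/
/-- For any point `p` of the tropical segment `tconv{x,y}`, the set of indices where
`p - z` attains its maximum is contained in `I_max(x-z) ∪ I_max(y-z)`. -/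
theorem stmt16 {n : ℕ} (x y z : Fin n → ℝ) (lam mu : ℝ)
    (p : Fin n → ℝ) (hp : p = fun i => max (x i + lam) (y i + mu)) :
    {i : Fin n | ∀ k, p k - z k ≤ p i - z i} ⊆
      {i : Fin n | ∀ k, x k - z k ≤ x i - z i} ∪ {i : Fin n | ∀ k, y k - z k ≤ y i - z i} := by
  subst hp
  intro i hi
  simp only [Set.mem_setOf_eq] at hi
  rcases max_cases (x i + lam) (y i + mu) with ⟨h, _⟩ | ⟨h, _⟩
  · left
    intro k
    have := hi k
    simp only [h] at this
    have hk : x k + lam ≤ max (x k + lam) (y k + mu) := le_max_left _ _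
    linarith
  · right
    intro k
    have := hi k
    simp only [h] at this
    have hk : y k + mu ≤ max (x k + lam) (y k + mu) := le_max_right _ _
    linarith
end

section
/- A closed, connected, locally tropically convex subset X of R^n/R·(1,...,1) is tropically convex: if every point x ∈ X has ε > 0 with B_ε^trop(x) ∩ X tropically convex, then X itself is tropically convex. -/
noncomputable def tnorm {n : ℕ} (x : Fin n → ℝ) : ℝ := (⨆ i, x i) - ⨅ i, x i

/-!
Fix `y ∈ X` and let `C` be the set of points `z` whose tropical path `t ↦ max(z, y + t)` to `y`
stays in `X`. It is closed because `X` is, and contains `y` because `X` is saturated. It is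
also open in `X`: modulo shifts the path from `z` is a compact subset of `X`, so one radius `δ`
of local tropical convexity serves along all of it, and a point `a` near `z` can then be pushed
along its own path in steps of length `δ / 2`, each new point being the tropical sum of the
previous one and a point of the path from `z`, both inside one convex ball. By connectedness
`C ⊇ X`, and `max(x + λ, y + μ)` is a shift of a point on the path from `x` to `y`.
-/

open Set Topology Metric

variable {n : ℕ}

def tropBall (p : Fin n → ℝ) (r : ℝ) : Set (Fin n → ℝ) := {z | tnorm (z - p) ≤ r}

def tropPath (z y : Fin n → ℝ) (t : ℝ) : Fin n → ℝ := fun i => max (z i) (y i + t)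

lemma TropConvex.inter {S T : Set (Fin n → ℝ)} (hS : TropConvex S) (hT : TropConvex T) :
    TropConvex (S ∩ T) := fun x hx y hy lam mu =>
  ⟨hS x hx.1 y hy.1 lam mu, hT x hx.2 y hy.2 lam mu⟩

lemma forall_of_forall_le_of_step {p : ℝ → Prop} {t₀ h : ℝ} (hh : 0 < h)
    (hbase : ∀ t ≤ t₀, p t) (hstep : ∀ s t, p s → s ≤ t → t ≤ s + h → p t) (t : ℝ) : p t := by
  have key : ∀ k : ℕ, ∀ t ≤ t₀ + k * h, p t := by
    intro k
    induction k with
    | zero => simpa using hbase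
    | succ k ih =>
      intro t ht
      rcases le_total t (t₀ + k * h) with hle | hge
      · exact ih t hle
      · exact hstep _ t (ih _ le_rfl) hge (by push_cast at ht; linarith)
  obtain ⟨k, hk⟩ := exists_nat_ge ((t - t₀) / h)
  exact key k t (by rw [div_le_iff₀ hh] at hk; linarith)

section tnorm

variable [Nonempty (Fin n)]

lemma tnorm_le_of_forall_le {v : Fin n → ℝ} {lo hi : ℝ} (hlo : ∀ i, lo ≤ v i)
    (hhi : ∀ i, v i ≤ hi) : tnorm v ≤ hi - lo :=
  sub_le_sub (ciSup_le hhi) (le_ciInf hlo)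

lemma tnorm_zero : tnorm (0 : Fin n → ℝ) = 0 := by
  simp [tnorm]

lemma tnorm_add_const (v : Fin n → ℝ) (c : ℝ) : tnorm (fun i => v i + c) = tnorm v := by
  simp only [tnorm, ← ciSup_add (Set.finite_range v).bddAbove,
    ← ciInf_add (Set.finite_range v).bddBelow]
  ring

lemma tnorm_le_two_mul_norm (v : Fin n → ℝ) : tnorm v ≤ 2 * ‖v‖ := by
  have hv : ∀ i, |v i| ≤ ‖v‖ := fun i => (Real.norm_eq_abs (v i)).symm ▸ norm_le_pi_norm v i
  have := tnorm_le_of_forall_le (fun i => (abs_le.mp (hv i)).1) (fun i => (abs_le.mp (hv i)).2)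
  linarith

lemma tnorm_sub_le_add (a b c : Fin n → ℝ) : tnorm (a - c) ≤ tnorm (a - b) + tnorm (b - c) := by
  have hab := Set.finite_range fun i => a i - b i
  have hbc := Set.finite_range fun i => b i - c i
  have h := tnorm_le_of_forall_le (v := a - c)
    (lo := (⨅ i, (a i - b i)) + ⨅ i, (b i - c i)) (hi := (⨆ i, (a i - b i)) + ⨆ i, (b i - c i))
    (fun i => by
      have := add_le_add (ciInf_le hab.bddBelow i) (ciInf_le hbc.bddBelow i)
      simp only [Pi.sub_apply]
      linarith)
    (fun i => by
      have := add_le_add (le_ciSup hab.bddAbove i) (le_ciSup hbc.bddAbove i)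
      simp only [Pi.sub_apply]
      linarith)
  simp only [tnorm, Pi.sub_apply] at h ⊢
  linarith

lemma tnorm_max_le (a b : Fin n → ℝ) (lam mu : ℝ) :
    tnorm (fun i => max (a i + lam) (b i + mu)) ≤ max (tnorm a) (tnorm b) := by
  have ha := Set.finite_range a
  have hb := Set.finite_range b
  calc tnorm (fun i => max (a i + lam) (b i + mu))
      ≤ max ((⨆ i, a i) + lam) ((⨆ i, b i) + mu) - max ((⨅ i, a i) + lam) ((⨅ i, b i) + mu) :=
        tnorm_le_of_forall_le
          (fun i => max_le_max (by grw [ciInf_le ha.bddBelow i]) (by grw [ciInf_le hb.bddBelow i]))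
          (fun i => max_le_max (by grw [le_ciSup ha.bddAbove i]) (by grw [le_ciSup hb.bddAbove i]))
    _ ≤ max ((⨆ i, a i) + lam - ((⨅ i, a i) + lam)) ((⨆ i, b i) + mu - ((⨅ i, b i) + mu)) :=
        max_sub_max_le_max _ _ _ _
    _ = max (tnorm a) (tnorm b) := by simp only [tnorm, add_sub_add_right_eq_sub]

lemma tropConvex_tropBall (p : Fin n → ℝ) (r : ℝ) : TropConvex (tropBall p r) := by
  intro z hz w hw lam mu
  have h : (fun i => max (z i + lam) (w i + mu)) - p
      = fun i => max ((z - p) i + lam) ((w - p) i + mu) := by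
    ext i
    simp only [Pi.sub_apply, ← max_sub_sub_right]
    ring_nf
  show tnorm _ ≤ r
  rw [h]
  exact (tnorm_max_le _ _ lam mu).trans (max_le hz hw)

lemma tropBall_add_const (p : Fin n → ℝ) (c r : ℝ) :
    tropBall (fun i => p i + c) r = tropBall p r := by
  ext z
  have h : z - (fun i => p i + c) = fun i => (z - p) i + -c := by
    ext i
    simp only [Pi.sub_apply]
    ring
  simp only [tropBall, mem_ofPred_eq, h, tnorm_add_const]

lemma tropBall_subset_tropBall {p q : Fin n → ℝ} {δ ε : ℝ} (h : tnorm (p - q) + δ ≤ ε) :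
    tropBall p δ ⊆ tropBall q ε := fun z hz => by
  have := tnorm_sub_le_add z p q
  simp only [tropBall, mem_ofPred_eq] at hz ⊢
  linarith

lemma TropConvex.inter_tropBall_of_subset {X : Set (Fin n → ℝ)} {p q : Fin n → ℝ} {δ ε : ℝ}
    (hX : TropConvex (X ∩ tropBall q ε)) (h : tropBall p δ ⊆ tropBall q ε) :
    TropConvex (X ∩ tropBall p δ) := by
  have : X ∩ tropBall p δ = X ∩ tropBall q ε ∩ tropBall p δ := by
    rw [inter_assoc, inter_eq_right.mpr h]
  exact this ▸ hX.inter (tropConvex_tropBall p δ)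

lemma IsCompact.exists_pos_forall_tropConvex {X K : Set (Fin n → ℝ)} (hK : IsCompact K)
    (hloc : ∀ q ∈ K, ∃ ε > 0, TropConvex (X ∩ tropBall q ε)) :
    ∃ δ > 0, ∀ p ∈ K, TropConvex (X ∩ tropBall p δ) := by
  refine Filter.Eventually.exists_gt (hK.eventually_forall_of_forall_eventually fun q hq => ?_)
  obtain ⟨ε, hε, hconv⟩ := hloc q hq
  have hδ : ∀ᶠ δ in 𝓝 (0 : ℝ), δ < ε / 2 := gt_mem_nhds (by linarith)
  have hp : ∀ᶠ p in 𝓝 q, dist p q < ε / 4 := ball_mem_nhds q (by linarith)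
  filter_upwards [hδ.prod_nhds hp] with ⟨δ, p⟩ ⟨hδ, hp⟩
  refine hconv.inter_tropBall_of_subset (tropBall_subset_tropBall ?_)
  linarith [tnorm_le_two_mul_norm (p - q), dist_eq_norm p q]

end tnorm

lemma continuous_tropPath (z y : Fin n → ℝ) : Continuous (tropPath z y) :=
  continuous_pi fun _ => continuous_const.max (continuous_const.add continuous_id)

lemma tropPath_eq_left {z y : Fin n → ℝ} {t : ℝ} (ht : t ≤ ⨅ i, (z i - y i)) :
    tropPath z y t = z := by
  ext i
  have := ciInf_le (Set.finite_range fun i => z i - y i).bddBelow i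
  exact max_eq_left (by linarith)

lemma tropPath_eq_right {z y : Fin n → ℝ} {t : ℝ} (ht : (⨆ i, (z i - y i)) ≤ t) :
    tropPath z y t = fun i => y i + t := by
  ext i
  have := le_ciSup (Set.finite_range fun i => z i - y i).bddAbove i
  exact max_eq_right (by linarith)

lemma tropPath_add_const_left (z y : Fin n → ℝ) (c t : ℝ) :
    tropPath (fun i => z i + c) y t = fun i => tropPath z y (t - c) i + c := by
  ext i
  simp only [tropPath, ← max_add_add_right]
  ring_nf

lemma tropPath_self (y : Fin n → ℝ) (t : ℝ) : tropPath y y t = fun i => y i + max 0 t := by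
  ext i
  simp only [tropPath, ← max_add_add_left, add_zero]

lemma exists_mem_Icc_tropPath_eq_add_const [Nonempty (Fin n)] (z y : Fin n → ℝ) (t : ℝ) :
    ∃ σ ∈ Icc (⨅ i, (z i - y i)) (⨆ i, (z i - y i)), ∃ c : ℝ,
      tropPath z y t = fun i => tropPath z y σ i + c := by
  have hle : (⨅ i, (z i - y i)) ≤ ⨆ i, (z i - y i) := ciInf_le_ciSup (Set.finite_range _).bddBelow
    (Set.finite_range _).bddAbove
  rcases le_or_gt t (⨅ i, (z i - y i)) with hlo | hlo
  · refine ⟨_, ⟨le_rfl, hle⟩, 0, ?_⟩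
    simp only [add_zero, tropPath_eq_left hlo, tropPath_eq_left le_rfl]
  rcases le_or_gt t (⨆ i, (z i - y i)) with hhi | hhi
  · exact ⟨t, ⟨hlo.le, hhi⟩, 0, by simp only [add_zero]⟩
  · refine ⟨_, ⟨hle, le_rfl⟩, t - ⨆ i, (z i - y i), ?_⟩
    rw [tropPath_eq_right hhi.le, tropPath_eq_right le_rfl]
    ext i
    ring

section Openness

variable [Nonempty (Fin n)] {X : Set (Fin n → ℝ)}

lemma exists_pos_forall_tropConvex_tropPath
    (hloc : ∀ x ∈ X, ∃ ε > 0, TropConvex (X ∩ tropBall x ε)) {z y : Fin n → ℝ}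
    (hz : ∀ t, tropPath z y t ∈ X) :
    ∃ δ > 0, ∀ t, TropConvex (X ∩ tropBall (tropPath z y t) δ) := by
  have hK := (isCompact_Icc (a := ⨅ i, (z i - y i)) (b := ⨆ i, (z i - y i))).image
    (continuous_tropPath z y)
  obtain ⟨δ, hδ, hconv⟩ := hK.exists_pos_forall_tropConvex (X := X) (by
    rintro _ ⟨σ, -, rfl⟩
    exact hloc _ (hz σ))
  refine ⟨δ, hδ, fun t => ?_⟩
  obtain ⟨σ, hσ, c, hc⟩ := exists_mem_Icc_tropPath_eq_add_const z y t
  rw [hc, tropBall_add_const]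
  exact hconv _ (mem_image_of_mem _ hσ)

variable {z y a : Fin n → ℝ} {T δ : ℝ}

/-- `tropPath a y t` is the tropical sum of `tropPath a y s` and `tropPath z y t`, and these
lie within tropical distance `T + (t - s)` of each other. -/
lemma tropPath_mem_of_le_of_sub_le (hz : ∀ t, tropPath z y t ∈ X)
    (hδ : ∀ t, TropConvex (X ∩ tropBall (tropPath z y t) δ)) (hza : z ≤ a)
    (haz : ∀ i, a i ≤ z i + T) {s t : ℝ} (hs : tropPath a y s ∈ X) (hst : s ≤ t)
    (hT : T + (t - s) ≤ δ) : tropPath a y t ∈ X := by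
  obtain ⟨j⟩ := ‹Nonempty (Fin n)›
  have hT0 : 0 ≤ T := by linarith [hza j, haz j]
  have hsP : tropPath a y s ∈ tropBall (tropPath z y t) δ := by
    refine (tnorm_le_of_forall_le (lo := -(t - s)) (hi := T) (fun i => ?_) (fun i => ?_)).trans
      (by linarith)
    all_goals
      have := hza i
      have := haz i
      simp only [tropPath, Pi.sub_apply]
      grind
  have hPP : tropPath z y t ∈ tropBall (tropPath z y t) δ := by
    simp only [tropBall, mem_ofPred_eq, sub_self, tnorm_zero]
    linarith
  convert (hδ t _ ⟨hs, hsP⟩ _ ⟨hz t, hPP⟩ 0 0).1 using 1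
  ext i
  have := hza i
  simp only [tropPath, add_zero]
  grind

lemma forall_tropPath_mem_of_le (hδpos : 0 < δ) (hz : ∀ t, tropPath z y t ∈ X)
    (hδ : ∀ t, TropConvex (X ∩ tropBall (tropPath z y t) δ)) (hza : z ≤ a)
    (haz : ∀ i, a i ≤ z i + T) (hTδ : T ≤ δ / 2) (ha : a ∈ X) (t : ℝ) :
    tropPath a y t ∈ X :=
  forall_of_forall_le_of_step (half_pos hδpos) (t₀ := ⨅ i, (a i - y i))
    (fun _ ht => (tropPath_eq_left ht).symm ▸ ha)
    (fun _ _ hs hst hts => tropPath_mem_of_le_of_sub_le hz hδ hza haz hs hst (by linarith)) t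

lemma exists_pos_forall_tropPath_mem_of_dist_lt
    (hsat : ∀ x ∈ X, ∀ c : ℝ, (fun i => x i + c) ∈ X)
    (hloc : ∀ x ∈ X, ∃ ε > 0, TropConvex (X ∩ tropBall x ε)) (hz : ∀ t, tropPath z y t ∈ X) :
    ∃ r > 0, ∀ a ∈ X, dist a z < r → ∀ t, tropPath a y t ∈ X := by
  obtain ⟨δ, hδpos, hδ⟩ := exists_pos_forall_tropConvex_tropPath hloc hz
  refine ⟨δ / 4, by positivity, fun a ha hdist => ?_⟩
  set u := ⨅ i, (a i - z i)
  have hz' : ∀ t, tropPath (fun i => z i + u) y t ∈ X := fun t => by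
    rw [tropPath_add_const_left]
    exact hsat _ (hz _) u
  have hδ' : ∀ t, TropConvex (X ∩ tropBall (tropPath (fun i => z i + u) y t) δ) := fun t => by
    rw [tropPath_add_const_left, tropBall_add_const]
    exact hδ _
  refine forall_tropPath_mem_of_le hδpos hz' hδ' (T := tnorm (a - z)) (fun i => ?_) (fun i => ?_)
    ?_ ha
  · have := ciInf_le (Set.finite_range fun i => a i - z i).bddBelow i
    show z i + u ≤ a i
    linarith
  · have := le_ciSup (Set.finite_range fun i => a i - z i).bddAbove i
    simp only [tnorm, Pi.sub_apply]
    linarith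
  · linarith [tnorm_le_two_mul_norm (a - z), dist_eq_norm a z]

end Openness

lemma isClosed_setOf_forall_tropPath_mem {X : Set (Fin n → ℝ)} (hX : IsClosed X)
    (y : Fin n → ℝ) : IsClosed {z | ∀ t, tropPath z y t ∈ X} := by
  simp only [ofPred_forall]
  exact isClosed_iInter fun t =>
    hX.preimage (continuous_pi fun i => (continuous_apply i).max continuous_const)

theorem stmt18_general {n : ℕ} (X : Set (Fin n → ℝ))
    (hsat : ∀ x ∈ X, ∀ c : ℝ, (fun i => x i + c) ∈ X)
    (hclosed : IsClosed X) (hconn : IsConnected X)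
    (hloc : ∀ x ∈ X, ∃ ε > (0:ℝ), TropConvex {y ∈ X | tnorm (y - x) ≤ ε}) :
    TropConvex X := by
  rcases isEmpty_or_nonempty (Fin n) with hn | hn
  · intro x hx y _ lam mu
    rwa [Subsingleton.elim (fun i => max (x i + lam) (y i + mu)) x]
  intro x hx y hy lam mu
  set S : Set X := {z | ∀ t, tropPath z y t ∈ X}
  have hS : IsClopen S := by
    refine ⟨(isClosed_setOf_forall_tropPath_mem hclosed y).preimage continuous_subtype_val,
      Metric.isOpen_iff.mpr fun z hz => ?_⟩
    obtain ⟨r, hr, h⟩ := exists_pos_forall_tropPath_mem_of_dist_lt hsat hloc hz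
    exact ⟨r, hr, fun a ha => h a a.2 ha⟩
  have := Subtype.preconnectedSpace hconn.isPreconnected
  have hyS : (⟨y, hy⟩ : X) ∈ S := fun t => by
    rw [tropPath_self]
    exact hsat y hy _
  have hxS : (⟨x, hx⟩ : X) ∈ S := by
    rw [hS.eq_univ ⟨_, hyS⟩]
    exact mem_univ _
  convert hsat _ (hxS (mu - lam)) lam using 1
  ext i
  simp only [tropPath, ← max_add_add_right]
  ring_nf

/-- A closed, connected, locally tropically convex subset of `ℝⁿ/ℝ·(1,…,1)` is tropically
convex. The quotient is encoded by a saturated subset `X ⊆ ℝⁿ` (invariant under adding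
multiples of the all-ones vector); the tropical ball of radius `ε` around `x` is
`{y | tnorm (y - x) ≤ ε}`. -/
theorem stmt18 {n : ℕ} (hn : 0 < n) (X : Set (Fin n → ℝ))
    (hsat : ∀ x ∈ X, ∀ c : ℝ, (fun i => x i + c) ∈ X)
    (hclosed : IsClosed X) (hconn : IsConnected X)
    (hloc : ∀ x ∈ X, ∃ ε > (0:ℝ), TropConvex {y ∈ X | tnorm (y - x) ≤ ε}) :
    TropConvex X :=
  stmt18_general X hsat hclosed hconn hloc
end
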